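/- Let c be a coset weighted potential game with respect to positive weights w, and let P_1 and P_2 be two coset weighted potential functions for c with respect to w. Then P_1 − P_2 is constant: there exists a real number C such that P_1(s) − P_2(s) = C for every strategy profile s ∈ S. -/
import Mathlib


/-- `f : S → ℝ` depends only on the strategies of the players other than `i`
(i.e. it is a function of `s_{-i}`). -/
def IndepOf {n : ℕ} {k : Fin n → ℕ} (i : Fin n) (f : (∀ j, Fin (k j)) → ℝ) : Prop :=
  ∀ (s : ∀ j, Fin (k j)) (x : Fin (k i)), f (Function.update s i x) = f s

/-- `P` is a coset weighted potential function for the game `c` with respect to the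
coset-depending weights `w`. -/
def IsCWPotentialFn {n : ℕ} {k : Fin n → ℕ} (c w : Fin n → (∀ j, Fin (k j)) → ℝ)
    (P : (∀ j, Fin (k j)) → ℝ) : Prop :=
  ∀ (i : Fin n) (s : ∀ j, Fin (k j)) (x y : Fin (k i)),
    c i (Function.update s i x) - c i (Function.update s i y)
      = w i s * (P (Function.update s i x) - P (Function.update s i y))

/-- **Proposition 3.2.** Two coset weighted potential functions of a coset weighted
potential game differ by a constant. -/
theorem potential_unique_up_to_constant (n : ℕ) (hn : 2 ≤ n) (k : Fin n → ℕ)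
    (hk : ∀ i, 2 ≤ k i) (c w : Fin n → (∀ j, Fin (k j)) → ℝ)
    (hw : ∀ i s, 0 < w i s) (hwI : ∀ i, IndepOf i (w i))
    (P₁ P₂ : (∀ j, Fin (k j)) → ℝ)
    (hP₁ : IsCWPotentialFn c w P₁) (hP₂ : IsCWPotentialFn c w P₂) :
    ∃ C : ℝ, ∀ s : ∀ j, Fin (k j), P₁ s - P₂ s = C := by
  classical
  set D : (∀ j, Fin (k j)) → ℝ := fun s => P₁ s - P₂ s with hD
  have step : ∀ (i : Fin n) (s : ∀ j, Fin (k j)) (x : Fin (k i)),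
      D (Function.update s i x) = D s := by
    intro i s x
    have h1 := hP₁ i s x (s i)
    have h2 := hP₂ i s x (s i)
    rw [Function.update_eq_self] at h1 h2
    have key : P₁ (Function.update s i x) - P₁ s = P₂ (Function.update s i x) - P₂ s :=
      mul_left_cancel₀ (hw i s).ne' (h1.symm.trans h2)
    simp only [hD]
    linarith
  have s₀ : ∀ j, Fin (k j) := fun j => ⟨0, by have := hk j; omega⟩
  refine ⟨D s₀, ?_⟩
  suffices h : ∀ (A : Finset (Fin n)) (s t : ∀ j, Fin (k j)),
      (∀ j ∉ A, s j = t j) → D s = D t by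
    intro s
    exact h Finset.univ s s₀ (by simp)
  intro A
  induction A using Finset.induction with
  | empty =>
    intro s t h
    have : s = t := funext fun j => h j (by simp)
    rw [this]
  | @insert i A hi ih =>
    intro s t h
    rw [← step i s (t i)]
    apply ih
    intro j hj
    by_cases hji : j = i
    · subst hji; simp
    · rw [Function.update_of_ne hji]
      exact h j (by simp [hj, hji])
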